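/- arXiv:1711.10239 — 3 statements merged into one kernel-verified Lean document; each statement's English description precedes it below -/
import Mathlib

section
/- Grafting morphism property of Υ̊ (Lemma 'lem:graftMorphism', first identity): For every family F = (F^𝔩_𝔱)_{𝔱∈𝔏₊,𝔩∈𝔇} with every F^𝔩_𝔱 ∈ 𝒫, every o ∈ 𝒪, and all σ, σ̃ ∈ 𝔅, one has Υ̊^F[σ̃ ⋖_o σ] = Υ̊^F[σ̃] ◁_o Υ̊^F[σ] in 𝒫^{𝔏₊}, where Υ̊^F is extended linearly to finite linear combinations of trees. -/
/-
Common framework: multi-indices, the algebra of smooth functions on ℝ^𝒪,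
and the spaces of decorated trees 𝒱 and 𝔅 of [Bruned–Chandra–Chevyrev–Hairer,
"Renormalising SPDEs in regularity structures"], presented abstractly together
with the defining recursions of the various operators on them.
-/

open scoped BigOperators Classical

namespace SPDERenorm

/-! ### Multi-indices in `ℕ^{d+1}` -/

abbrev MIdx (d : ℕ) := Fin (d+1) → ℕ

/-- `k! = ∏ᵢ k[i]!`. -/
def mfact {d : ℕ} (k : MIdx d) : ℕ := ∏ i, Nat.factorial (k i)

/-- `C(k,ℓ) = ∏ᵢ binom(k[i], ℓ[i])`. -/
def mchoose {d : ℕ} (k l : MIdx d) : ℕ := ∏ i, Nat.choose (k i) (l i)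

/-- `|k| = Σᵢ k[i]`. -/
def msize {d : ℕ} (k : MIdx d) : ℕ := ∑ i, k i

/-- The unit multi-index `e_i`. -/
def munit {d : ℕ} (i : Fin (d+1)) : MIdx d := Pi.single i 1

/-- Sum of `f ℓ` over all multi-indices `ℓ ≤ m` (componentwise). -/
noncomputable def msum {d : ℕ} {A : Type*} [AddCommMonoid A] (m : MIdx d) (f : MIdx d → A) : A :=
  ∑ e : (∀ i : Fin (d+1), Fin (m i + 1)), f fun i => (e i : ℕ)

/-- The scaled size `|k|_𝔰 = Σᵢ k[i]·𝔰ᵢ`. -/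
noncomputable def wdeg {d : ℕ} (s : Fin (d+1) → ℝ) (k : MIdx d) : ℝ := ∑ i, (k i : ℝ) * s i

/-- The index set `𝒪 = 𝔏₊ × ℕ^{d+1}`. -/
abbrev Odx (Lp : Type) (d : ℕ) := Lp × MIdx d

/-! ### Functions on `ℝ^𝒪` and differential operators -/

/-- Real-valued functions on `ℝ^𝒪`. -/
abbrev FnO (Lp : Type) (d : ℕ) := (Odx Lp d → ℝ) → ℝ

/-- The coordinate function `𝒳_o`. -/
def Xc {Lp : Type} {d : ℕ} (o : Odx Lp d) : FnO Lp d := fun x => x o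

/-- The partial derivative `D_o` in the `o`-th coordinate. -/
noncomputable def Dpart {Lp : Type} {d : ℕ} [DecidableEq Lp] (o : Odx Lp d) (F : FnO Lp d) :
    FnO Lp d :=
  fun x => deriv (fun t : ℝ => F (Function.update x o t)) (x o)

/-- Iterated partial derivatives `D_{o₁} ∘ ⋯ ∘ D_{oₙ}` over a list. -/
noncomputable def Dlist {Lp : Type} {d : ℕ} [DecidableEq Lp] (L : List (Odx Lp d))
    (F : FnO Lp d) : FnO Lp d :=
  L.foldr Dpart F

/-- The derivation `∂_i F = Σ_{(𝔱,p)} 𝒳_{(𝔱,p+e_i)} · D_{(𝔱,p)} F`. -/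
noncomputable def pderivO {Lp : Type} {d : ℕ} [DecidableEq Lp] (i : Fin (d+1)) (F : FnO Lp d) :
    FnO Lp d :=
  fun x => ∑ᶠ o : Odx Lp d, Xc (o.1, o.2 + munit i) x * Dpart o F x

/-- `∂^k = ∏ᵢ ∂ᵢ^{k[i]}`. -/
noncomputable def mpderiv {Lp : Type} {d : ℕ} [DecidableEq Lp] (k : MIdx d) (F : FnO Lp d) :
    FnO Lp d :=
  (List.finRange (d+1)).foldr (fun i G => (pderivO i)^[k i] G) F

/-- `D^α` for a finitely supported `α ∈ ℕ^𝒪`. -/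
noncomputable def Dexp {Lp : Type} {d : ℕ} [DecidableEq Lp] (α : Odx Lp d →₀ ℕ)
    (F : FnO Lp d) : FnO Lp d :=
  Dlist (Finsupp.toMultiset α).toList F

/-- `α! = ∏_o α[o]!`. -/
def afact {Lp : Type} {d : ℕ} (α : Odx Lp d →₀ ℕ) : ℕ := α.prod fun _ n => Nat.factorial n

/-- The monomial `𝒳^α`. -/
noncomputable def Xpow {Lp : Type} {d : ℕ} (α : Odx Lp d →₀ ℕ) : FnO Lp d :=
  fun x => α.prod fun o n => x o ^ n

/-- `F` depends only on the coordinates in `s`. -/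
def DependsOnlyOn {Lp : Type} {d : ℕ} (F : FnO Lp d) (s : Set (Odx Lp d)) : Prop :=
  ∀ x y, (∀ o ∈ s, x o = y o) → F x = F y

/-- Membership in `𝒞_𝒪`: smooth functions depending on finitely many coordinates. -/
def IsSmoothCO {Lp : Type} {d : ℕ} (F : FnO Lp d) : Prop :=
  ∃ (s : Finset (Odx Lp d)) (g : (↥s → ℝ) → ℝ),
    ContDiff ℝ (⊤ : ℕ∞) g ∧ ∀ x, F x = g fun o => x o.1

/-- Membership in `𝒫 ⊆ 𝒞_𝒪` (relative to the partition `𝒪 = 𝒪₊ ⊔ 𝒪₋`). -/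
def IsP {Lp : Type} {d : ℕ} (Om Op : Set (Odx Lp d)) (F : FnO Lp d) : Prop :=
  ∃ (m : ℕ) (α : Fin m → (Odx Lp d →₀ ℕ)) (G : Fin m → FnO Lp d),
    Function.Injective α ∧
    (∀ j, ∀ o ∈ (α j).support, o ∈ Om) ∧
    (∀ j, IsSmoothCO (G j)) ∧
    (∀ j, G j ≠ 0) ∧
    (∀ j, DependsOnlyOn (G j) Op) ∧
    F = fun x => ∑ j, G j x * Xpow (α j) x

/-- `F` is a real polynomial in finitely many of the coordinate functions. -/
def IsPolyFn {Lp : Type} {d : ℕ} (F : FnO Lp d) : Prop :=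
  ∃ (s : Finset (Odx Lp d)) (P : MvPolynomial (↥s) ℝ),
    ∀ x, F x = MvPolynomial.eval (fun o => x o.1) P

/-! ### The trees of `𝒱` -/

/-- The set `𝒱` of decorated rooted trees, presented abstractly: a tree is uniquely
built from a root decoration `(𝔩,k) ∈ 𝔇 × ℕ^{d+1}` and a multiset of decorated branches,
and every tree arises this way (induction). -/
structure TreeV (Lp Dr : Type) (d : ℕ) where
  V : Type
  node : Dr → MIdx d → Multiset (Odx Lp d × V) → V
  node_bij : Function.Bijective
    (fun x : Dr × MIdx d × Multiset (Odx Lp d × V) => node x.1 x.2.1 x.2.2)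
  ind : ∀ P : V → Prop,
    (∀ l k (M : Multiset (Odx Lp d × V)), (∀ x ∈ M, P x.2) → P (node l k M)) → ∀ τ, P τ

namespace TreeV

variable {Lp Dr : Type} {d : ℕ} (S : TreeV Lp Dr d)

/-- Rebuild a tree after replacing the `j`-th branch by a linear combination of trees. -/
noncomputable def replace (l : Dr) (k : MIdx d) (L : List (Odx Lp d × S.V))
    (j : Fin L.length) (w : S.V →₀ ℝ) : S.V →₀ ℝ :=
  w.sum fun τ' c => Finsupp.single (S.node l k (↑(L.set j ((L.get j).1, τ')))) c

/-- Decomposition of a tree into its root decoration and branches. -/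
noncomputable def dec : S.V ≃ Dr × MIdx d × Multiset (Odx Lp d × S.V) :=
  (Equiv.ofBijective _ S.node_bij).symm

/-- The polynomial decoration at the root. -/
noncomputable def polyOf (τ : S.V) : MIdx d := (S.dec τ).2.1

/-- The multiset of branches at the root. -/
noncomputable def branchesOf (τ : S.V) : Multiset (Odx Lp d × S.V) := (S.dec τ).2.2

/-- The commutative tree product merging the roots of `g 0, …, g (n-1)`
(adding the polynomial decorations), the merged root receiving the driver label `l`. -/
noncomputable def merge (l : Dr) {n : ℕ} (g : Fin n → S.V) : S.V :=
  S.node l (∑ r, S.polyOf (g r)) (∑ r, S.branchesOf (g r))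

/-- Defining recursion of the grafting operators `⋖̂_o : 𝕍 ⊗ 𝕍 → 𝕍`. -/
def GraftSpec [DecidableEq Lp] (graft : Odx Lp d → S.V → S.V → (S.V →₀ ℝ)) : Prop :=
  ∀ (t : Lp) (p : MIdx d) (τ : S.V) (l : Dr) (k : MIdx d) (L : List (Odx Lp d × S.V)),
    graft (t, p) τ (S.node l k ↑L) =
      msum (k ⊓ p) (fun ℓ =>
        (mchoose k ℓ : ℝ) •
          Finsupp.single (S.node l (k - ℓ) (((t, p - ℓ), τ) ::ₘ (↑L : Multiset _))) 1)
      + ∑ j : Fin L.length, S.replace l k L j (graft (t, p) τ (L.get j).2)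

/-- Defining recursion of the symmetry factor `S(τ)`. -/
def SymSpec [DecidableEq Lp] [DecidableEq S.V] (sym : S.V → ℕ) : Prop :=
  ∀ (l : Dr) (k : MIdx d) (M : Multiset (Odx Lp d × S.V)),
    sym (S.node l k M) =
      mfact k * ∏ x ∈ M.toFinset, Nat.factorial (M.count x) * sym x.2 ^ M.count x

/-- Defining recursion of the inner product on `𝕍`. -/
def IPSpec (ip : S.V → S.V → ℝ) : Prop :=
  ∀ (l l' : Dr) (k k' : MIdx d) (L L' : List (Odx Lp d × S.V)),
    ip (S.node l k ↑L) (S.node l' k' ↑L') =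
      (if l = l' ∧ k = k' then (mfact k : ℝ) else 0) *
        ∑ s : Fin L.length ≃ Fin L'.length,
          ∏ j : Fin L.length,
            (if (L.get j).1 = (L'.get (s j)).1 then ip (L.get j).2 (L'.get (s j)).2 else 0)

/-- Defining recursion of `Υ^F`. -/
def UpsSpec [DecidableEq Lp] (F : Lp → Dr → FnO Lp d) (Ups : Lp → S.V → FnO Lp d) : Prop :=
  ∀ (t : Lp) (l : Dr) (k : MIdx d) (L : List (Odx Lp d × S.V)),
    Ups t (S.node l k ↑L) = fun x =>
      (∏ j : Fin L.length, Ups (L.get j).1.1 (L.get j).2 x) *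
        mpderiv k (Dlist (L.map Prod.fst) (F t l)) x

/-- Defining recursion of the raising operator `↑̂_i` on `𝕍`. -/
def RaiseSpec (raise : Fin (d+1) → S.V → (S.V →₀ ℝ)) : Prop :=
  ∀ (i : Fin (d+1)) (l : Dr) (k : MIdx d) (L : List (Odx Lp d × S.V)),
    raise i (S.node l k ↑L) =
      Finsupp.single (S.node l (k + munit i) ↑L) 1
      + ∑ j : Fin L.length, S.replace l k L j (raise i (L.get j).2)

/-- Defining recursion of the cutting operator `⋖̂*_o : 𝕍 → 𝕍 ⊗ 𝕍` (elements of
`𝕍 ⊗ 𝕍` represented as finitely supported functions on pairs of trees, a pair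
`(branch, trunk)` recording a cut). -/
def CutSpec [DecidableEq Lp] (cut : Odx Lp d → S.V → (S.V × S.V →₀ ℝ)) : Prop :=
  ∀ (t : Lp) (p : MIdx d) (l : Dr) (k : MIdx d) (L : List (Odx Lp d × S.V)),
    cut (t, p) (S.node l k ↑L) =
      (∑ j : Fin L.length,
        if (L.get j).1.1 = t ∧ (L.get j).1.2 ≤ p then
          ((mfact (p - (L.get j).1.2) : ℝ))⁻¹ •
            Finsupp.single ((L.get j).2,
              S.node l (k + (p - (L.get j).1.2)) ↑(L.eraseIdx j)) 1
        else 0)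
      + ∑ j : Fin L.length,
          (cut (t, p) (L.get j).2).sum fun ab c =>
            Finsupp.single (ab.1, S.node l k ↑(L.set j ((L.get j).1, ab.2))) c

/-- Defining recursion of the lowering operator `↑̂*_i` on `𝕍`. -/
def LowSpec (low : Fin (d+1) → S.V → (S.V →₀ ℝ)) : Prop :=
  ∀ (i : Fin (d+1)) (l : Dr) (k : MIdx d) (L : List (Odx Lp d × S.V)),
    low i (S.node l k ↑L) =
      (k i : ℝ) • Finsupp.single (S.node l (k - munit i) ↑L) 1
      + ∑ j : Fin L.length, S.replace l k L j (low i (L.get j).2)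

/-- Defining recursion of the predicate "`τ` is `𝔱`-non-vanishing for `F`". -/
def NVSpec [DecidableEq Lp] (F : Lp → Dr → FnO Lp d) (NV : Lp → S.V → Prop) : Prop :=
  ∀ (t : Lp) (l : Dr) (k : MIdx d) (L : List (Odx Lp d × S.V)),
    NV t (S.node l k ↑L) ↔
      (mpderiv k (Dlist (L.map Prod.fst) (F t l)) ≠ 0 ∧
        ∀ j : Fin L.length, NV (L.get j).1.1 (L.get j).2)

/-- The coefficient series of `U_o − u_o·𝟏`, for the jet `U` with Taylor coefficients `u`
and planted-tree coefficients `c_𝔱(τ)/S(τ)`. -/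
noncomputable def uSeries (z : Dr) (u : Odx Lp d → ℝ) (c : Lp → S.V → ℝ) (sym : S.V → ℕ)
    (o : Odx Lp d) (σ : S.V) : ℝ :=
  (∑ᶠ q : MIdx d, if q ≠ 0 ∧ σ = S.node z q 0 then u (o.1, o.2 + q) / (mfact q : ℝ) else 0) +
  ∑ᶠ τ : S.V, if σ = S.node z 0 {(o, τ)} then c o.1 τ / (sym τ : ℝ) else 0

/-- The coefficient series of the product `(U − u·𝟏)^α · Ξ_l`, expanded by multilinearity
using the commutative tree product merging the roots. -/
noncomputable def powCoef (coef : Odx Lp d → S.V → ℝ) (l : Dr) (α : Odx Lp d →₀ ℕ)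
    (σ : S.V) : ℝ :=
  ∑ᶠ g : Fin (Finsupp.toMultiset α).toList.length → S.V,
    (∏ r, coef ((Finsupp.toMultiset α).toList.get r) (g r)) *
      (if σ = S.merge l g then 1 else 0)

/-- The coefficient series of `Σ_{𝔩∈𝔇} F^𝔩_𝔱(U)·Ξ_𝔩`, where
`F^𝔩_𝔱(U)·Ξ_𝔩 = Σ_α (D^α F^𝔩_𝔱(u)/α!)·(U − u·𝟏)^α·Ξ_𝔩`. -/
noncomputable def lhsCoef [DecidableEq Lp] (F : Lp → Dr → FnO Lp d) (u : Odx Lp d → ℝ)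
    (coef : Odx Lp d → S.V → ℝ) (t : Lp) (σ : S.V) : ℝ :=
  ∑ᶠ l : Dr, ∑ᶠ α : Odx Lp d →₀ ℕ,
    Dexp α (F t l) u / (afact α : ℝ) * S.powCoef coef l α σ

/-- Defining recursion of the 𝔰-degree `|·|_𝔰` of decorated trees (with driver labels in
`𝔏₋ ⊔ {𝟎}`, encoded as `Option Lm` with `none = 𝟎`). -/
def DegSpec {Lm : Type} (S : TreeV Lp (Option Lm) d) (s : Fin (d+1) → ℝ)
    (degL : Lp → ℝ) (degLm : Lm → ℝ) (deg : S.V → ℝ) : Prop :=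
  ∀ (l : Option Lm) (k : MIdx d) (M : Multiset (Odx Lp d × S.V)),
    deg (S.node l k M) =
      l.elim 0 degLm + wdeg s k +
        ((M.map fun x => (degL x.1.1 - wdeg s x.1.2) + deg x.2).sum)

end TreeV

/-! ### The trees of `𝔅` -/

/-- Polynomial node-decoration factors `𝓘_{(𝔱,p)}[X^k]` with `p ≤ k` and `p ≠ k`;
an element is a pair `((𝔱,p), k)` subject to these constraints. -/
abbrev PolyDec (Lp : Type) (d : ℕ) :=
  {x : Odx Lp d × MIdx d // x.1.2 ≤ x.2 ∧ x.1.2 ≠ x.2}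

/-- Raise the polynomial exponent of a `PolyDec` by `e_i`. -/
def PolyDec.bump {Lp : Type} {d : ℕ} (pd : PolyDec Lp d) (i : Fin (d+1)) : PolyDec Lp d :=
  ⟨(pd.1.1, pd.1.2 + munit i), by
    constructor
    · exact fun j => le_trans (pd.2.1 j) (Nat.le_add_right _ _)
    · intro h
      have hi : pd.1.1.2 i ≤ pd.1.2 i := pd.2.1 i
      have h' : pd.1.1.2 i = pd.1.2 i + munit i i := congrFun h i
      simp only [munit, Pi.single_eq_same] at h'
      omega⟩

/-- The fresh polynomial decoration `𝓘_{(𝔱,p)}[X^{p+e_i}]`. -/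
def freshPD {Lp : Type} {d : ℕ} (o : Odx Lp d) (i : Fin (d+1)) : PolyDec Lp d :=
  ⟨(o, o.2 + munit i), by
    constructor
    · exact fun j => Nat.le_add_right _ _
    · intro h
      have h' : o.2 i = o.2 i + munit i i := congrFun h i
      simp only [munit, Pi.single_eq_same] at h'
      omega⟩

/-- Lower the polynomial exponent of a `PolyDec` by `e_i`. -/
def PolyDec.lower {Lp : Type} {d : ℕ} (pd : PolyDec Lp d) (i : Fin (d+1))
    (h : pd.1.1.2 + munit i ≤ pd.1.2) (hne : ¬ pd.1.2 - munit i = pd.1.1.2) : PolyDec Lp d :=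
  ⟨(pd.1.1, pd.1.2 - munit i), by
    constructor
    · intro j
      have hj := h j
      simp only [Pi.add_apply, Pi.sub_apply] at hj ⊢
      omega
    · exact fun hh => hne hh.symm⟩

/-- The set `𝔅` of decorated rooted trees with polynomial node decorations, presented
abstractly. -/
structure TreeB (Lp Dr : Type) (d : ℕ) where
  B : Type
  node : Dr → Multiset (PolyDec Lp d) → Multiset (Odx Lp d × B) → B
  node_bij : Function.Bijective
    (fun x : Dr × Multiset (PolyDec Lp d) × Multiset (Odx Lp d × B) => node x.1 x.2.1 x.2.2)
  ind : ∀ P : B → Prop,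
    (∀ l N (M : Multiset (Odx Lp d × B)), (∀ x ∈ M, P x.2) → P (node l N M)) → ∀ σ, P σ

namespace TreeB

variable {Lp Dr : Type} {d : ℕ} (S : TreeB Lp Dr d)

/-- Rebuild a tree after replacing the `j`-th branch by a linear combination of trees. -/
noncomputable def replace (l : Dr) (N : List (PolyDec Lp d)) (L : List (Odx Lp d × S.B))
    (j : Fin L.length) (w : S.B →₀ ℝ) : S.B →₀ ℝ :=
  w.sum fun σ' c => Finsupp.single (S.node l ↑N (↑(L.set j ((L.get j).1, σ')))) c

/-- Defining recursion of `Υ̊^F`. -/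
def UpsSpec [DecidableEq Lp] (F : Lp → Dr → FnO Lp d) (Ups : Lp → S.B → FnO Lp d) : Prop :=
  ∀ (t : Lp) (l : Dr) (N : List (PolyDec Lp d)) (L : List (Odx Lp d × S.B)),
    Ups t (S.node l ↑N ↑L) = fun x =>
      (∏ i : Fin N.length, x ((N.get i).1.1.1, (N.get i).1.2)) *
      (∏ j : Fin L.length, Ups (L.get j).1.1 (L.get j).2 x) *
      Dlist (N.map (fun pd => pd.1.1) ++ L.map Prod.fst) (F t l) x

/-- Defining recursion of the grafting operators `⋖_o` on `𝔅`. -/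
def GraftSpec (graft : Odx Lp d → S.B → S.B → (S.B →₀ ℝ)) : Prop :=
  ∀ (o : Odx Lp d) (σ' : S.B) (l : Dr) (N : List (PolyDec Lp d)) (L : List (Odx Lp d × S.B)),
    graft o σ' (S.node l ↑N ↑L) =
      Finsupp.single (S.node l ↑N ((o, σ') ::ₘ (↑L : Multiset _))) 1
      + (∑ j : Fin L.length, S.replace l N L j (graft o σ' (L.get j).2))
      + ∑ i : Fin N.length,
          (if o = ((N.get i).1.1.1, (N.get i).1.2) then
            Finsupp.single
              (S.node l ↑(N.eraseIdx i) (((N.get i).1.1, σ') ::ₘ (↑L : Multiset _))) 1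
          else 0)

/-- Defining recursion of the inner product on `𝔹`. -/
def IPSpec (ip : S.B → S.B → ℝ) : Prop :=
  ∀ (l l' : Dr) (N N' : List (PolyDec Lp d)) (L L' : List (Odx Lp d × S.B)),
    ip (S.node l ↑N ↑L) (S.node l' ↑N' ↑L') =
      (if l = l' then 1 else 0) *
      (∑ s : Fin N.length ≃ Fin N'.length,
        ∏ i : Fin N.length,
          (if (N.get i).1 = (N'.get (s i)).1 then
            (mfact ((N.get i).1.2 - (N.get i).1.1.2) : ℝ)
          else 0)) *
      ∑ s : Fin L.length ≃ Fin L'.length,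
        ∏ j : Fin L.length,
          (if (L.get j).1 = (L'.get (s j)).1 then ip (L.get j).2 (L'.get (s j)).2 else 0)

/-- Defining recursion of the raising operator `↑_i` on `𝔅`, producing a formal series
(represented by its coefficient function `𝔅 → ℝ`). -/
def RaiseSpec (raise : Fin (d+1) → S.B → (S.B → ℝ)) : Prop :=
  ∀ (i : Fin (d+1)) (l : Dr) (N : List (PolyDec Lp d)) (L : List (Odx Lp d × S.B)),
    raise i (S.node l ↑N ↑L) = fun σ'' =>
      (∑ ib : Fin N.length,
        (if σ'' = S.node l ↑(N.set ib ((N.get ib).bump i)) ↑L then 1 else 0))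
      + (if ∃ o : Odx Lp d, σ'' = S.node l (freshPD o i ::ₘ (↑N : Multiset _)) ↑L then 1 else 0)
      + ∑ j : Fin L.length,
          ∑ᶠ σ' : S.B,
            raise i (L.get j).2 σ' *
              (if σ'' = S.node l ↑N ↑(L.set j ((L.get j).1, σ')) then 1 else 0)

/-- Defining recursion of the lowering operator `↑*_i` on `𝔅`. -/
def LowSpec (low : Fin (d+1) → S.B → (S.B →₀ ℝ)) : Prop :=
  ∀ (i : Fin (d+1)) (l : Dr) (N : List (PolyDec Lp d)) (L : List (Odx Lp d × S.B)),
    low i (S.node l ↑N ↑L) =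
      (∑ ib : Fin N.length,
        (if h : (N.get ib).1.1.2 + munit i ≤ (N.get ib).1.2 then
          (((N.get ib).1.2 i - (N.get ib).1.1.2 i : ℕ) : ℝ) •
            (if he : (N.get ib).1.2 - munit i = (N.get ib).1.1.2 then
              Finsupp.single (S.node l ↑(N.eraseIdx ib) ↑L) 1
            else
              Finsupp.single (S.node l ↑(N.set ib ((N.get ib).lower i h he)) ↑L) 1)
        else 0))
      + ∑ j : Fin L.length, S.replace l N L j (low i (L.get j).2)

/-- Defining recursion of the cutting operator `⋖*_o : 𝔹 → 𝔹 ⊗ 𝔹` (elements of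
`𝔹 ⊗ 𝔹` represented as finitely supported functions on pairs of trees, a pair
`(branch, trunk)` recording a cut). -/
def CutSpec (cut : Odx Lp d → S.B → (S.B × S.B →₀ ℝ)) : Prop :=
  ∀ (t : Lp) (p : MIdx d) (l : Dr) (N : List (PolyDec Lp d)) (L : List (Odx Lp d × S.B)),
    cut (t, p) (S.node l ↑N ↑L) =
      (∑ j : Fin L.length,
        (if hc : (L.get j).1.1 = t ∧ (L.get j).1.2 ≤ p then
          ((mfact (p - (L.get j).1.2) : ℝ))⁻¹ •
            Finsupp.single ((L.get j).2,
              S.node l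
                (if he : (L.get j).1.2 = p then (↑N : Multiset (PolyDec Lp d))
                 else (⟨((L.get j).1, p), hc.2, he⟩ ::ₘ (↑N : Multiset (PolyDec Lp d))))
                ↑(L.eraseIdx j)) 1
        else 0))
      + ∑ j : Fin L.length,
          (cut (t, p) (L.get j).2).sum fun ab c =>
            Finsupp.single (ab.1, S.node l ↑N ↑(L.set j ((L.get j).1, ab.2))) c

end TreeB

/-- Defining recursion of the map `Q : 𝔹 → 𝕍` collapsing polynomial decorations. -/
def QSpec {Lp Dr : Type} {d : ℕ} (SB : TreeB Lp Dr d) (SV : TreeV Lp Dr d)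
    (Qf : SB.B → SV.V) : Prop :=
  ∀ (l : Dr) (N : Multiset (PolyDec Lp d)) (M : Multiset (Odx Lp d × SB.B)),
    Qf (SB.node l N M) =
      SV.node l ((N.map fun pd => pd.1.2 - pd.1.1.2).sum) (M.map fun x => (x.1, Qf x.2))

/-- The generic summand of the multivariate Faà di Bruno formula, indexed by `(r, q⃗, m⃗)`;
it vanishes unless `(q⃗, m⃗) ∈ I(r,k)`. -/
noncomputable def fdbSummand {Lp : Type} {d : ℕ} [DecidableEq Lp] (lo : LinearOrder (MIdx d))
    (F : FnO Lp d) (k : MIdx d)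
    (p : Σ r : ℕ, (Fin r → MIdx d) × (Fin r → (Odx Lp d →₀ ℕ))) : FnO Lp d :=
  if (∀ j, p.2.2 j ≠ 0) ∧ (∀ j j' : Fin p.1, j < j' → lo.lt (p.2.1 j) (p.2.1 j')) ∧
      (∀ j, lo.lt 0 (p.2.1 j)) ∧ (∑ j, ((p.2.2 j).sum fun _ n => n) • p.2.1 j) = k then
    fun x =>
      (∏ j, (p.2.2 j).prod fun o n =>
        (x (o.1, o.2 + p.2.1 j) / (mfact (p.2.1 j) : ℝ)) ^ n / (Nat.factorial n : ℝ)) *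
        Dexp (∑ j, p.2.2 j) F x
  else 0

/-! ### Generic decorated trees -/

/-- Decorated rooted trees over node species `N` and edge species `E`,
presented abstractly. -/
structure GTree (N E : Type) where
  T : Type
  node : N → Multiset (E × T) → T
  node_bij : Function.Bijective (fun x : N × Multiset (E × T) => node x.1 x.2)
  ind : ∀ P : T → Prop, (∀ Y M, (∀ x ∈ M, P x.2) → P (node Y M)) → ∀ τ, P τ

namespace GTree

/-- Multilinear expansion of a list of edge-decorated linear combinations of trees into a
linear combination of branch multisets. -/
noncomputable def expandAux {N E : Type} (S : GTree N E) :
    List (E × (S.T →₀ ℝ)) → (Multiset (E × S.T) →₀ ℝ)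
  | [] => Finsupp.single 0 1
  | (e, w) :: L =>
      w.sum fun τ' c => (S.expandAux L).sum fun M c' => Finsupp.single ((e, τ') ::ₘ M) (c * c')

/-- Defining recursion of the functorial extension `𝔗(A)` of a linear map `A` between
the free vector spaces on the node species. -/
def MapSpec {N N' E : Type} (S : GTree N E) (S' : GTree N' E)
    (A : N → (N' →₀ ℝ)) (TA : S.T → (S'.T →₀ ℝ)) : Prop :=
  ∀ (Y : N) (L : List (E × S.T)),
    TA (S.node Y ↑L) =
      (A Y).sum fun Y' c =>
        (S'.expandAux (L.map fun x => (x.1, TA x.2))).sum fun M c' =>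
          Finsupp.single (S'.node Y' M) (c * c')

/-- Defining recursion of the inner product on `𝔗(𝖭,𝖤)` induced by an inner product on
the node species. -/
def IPSpec {N E : Type} (S : GTree N E) (ipN : N → N → ℝ) (ip : S.T → S.T → ℝ) : Prop :=
  ∀ (Y Y' : N) (L L' : List (E × S.T)),
    ip (S.node Y ↑L) (S.node Y' ↑L') =
      ipN Y Y' * ∑ s : Fin L.length ≃ Fin L'.length,
        ∏ j : Fin L.length,
          (if (L.get j).1 = (L'.get (s j)).1 then ip (L.get j).2 (L'.get (s j)).2 else 0)

end GTree

/-!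
The identity is proved by induction on `σ`. At a root, `Υ̊^F_𝔟[σ]` is the product of the monomial
`∏ᵢ 𝒳_{(𝔱ᵢ,kᵢ)}`, of the values `Υ̊^F_{𝔱_j}[σ_j]` of the branches, and of the derivative
`∏ᵢ D_{(𝔱ᵢ,pᵢ)} ∏_j D_{o_j} F^𝔩_𝔟`. By the Leibniz rule `D_o` of this product splits into three sums,
which match the three kinds of terms of `σ̃ ⋖_o σ`: differentiating the `F`-factor gives the new
edge `𝓘_o[σ̃]` at the root (partial derivatives of smooth functions commute, so the order of the
derivatives is irrelevant), differentiating a branch gives grafting into that branch (induction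
hypothesis), and differentiating `𝒳_{(𝔱ᵢ,kᵢ)}` gives `δ_{o,(𝔱ᵢ,kᵢ)}`, i.e. the replacement of
`𝓘_{(𝔱ᵢ,pᵢ)}[X^{kᵢ}]` by the edge `𝓘_{(𝔱ᵢ,pᵢ)}[σ̃]`.
-/

section Smooth

variable {Lp : Type} {d : ℕ}

theorem contDiff_restrict_subset {s s' : Finset (Odx Lp d)} (h : s ⊆ s') :
    ContDiff ℝ (⊤ : ℕ∞) fun (z : ↥s' → ℝ) (i : ↥s) => z ⟨i, h i.2⟩ :=
  contDiff_pi.2 fun _ => contDiff_apply _ _ _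

theorem IsSmoothCO.map₂ {F G : FnO Lp d} (hF : IsSmoothCO F) (hG : IsSmoothCO G)
    {h : ℝ → ℝ → ℝ} (hh : ContDiff ℝ (⊤ : ℕ∞) fun p : ℝ × ℝ => h p.1 p.2) :
    IsSmoothCO fun x => h (F x) (G x) := by
  obtain ⟨s₁, g₁, hg₁, hF⟩ := hF
  obtain ⟨s₂, g₂, hg₂, hG⟩ := hG
  refine ⟨s₁ ∪ s₂, fun z => h (g₁ fun i => z ⟨i, Finset.mem_union_left _ i.2⟩)
    (g₂ fun i => z ⟨i, Finset.mem_union_right _ i.2⟩), ?_, fun x => by simp only [hF, hG]⟩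
  exact hh.comp ((hg₁.comp (contDiff_restrict_subset Finset.subset_union_left)).prodMk
    (hg₂.comp (contDiff_restrict_subset Finset.subset_union_right)))

variable (Lp d) in
/-- The algebra `𝒞_𝒪`. -/
def smoothCO : Subalgebra ℝ (FnO Lp d) where
  carrier := {F | IsSmoothCO F}
  mul_mem' hF hG := hF.map₂ hG (contDiff_fst.mul contDiff_snd)
  add_mem' hF hG := hF.map₂ hG (contDiff_fst.add contDiff_snd)
  algebraMap_mem' c := ⟨∅, fun _ => c, contDiff_const, fun _ => rfl⟩

theorem Xc_mem_smoothCO (o : Odx Lp d) : Xc o ∈ smoothCO Lp d :=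
  ⟨{o}, fun z => z ⟨o, Finset.mem_singleton_self o⟩, contDiff_apply _ _ _, fun _ => rfl⟩

theorem Xpow_mem_smoothCO (α : Odx Lp d →₀ ℕ) : Xpow α ∈ smoothCO Lp d := by
  have : Xpow α = ∏ o ∈ α.support, Xc o ^ α o := by
    funext x
    simp [Xpow, Finsupp.prod, Finset.prod_apply, Xc]
  rw [this]
  exact Subalgebra.prod_mem _ fun o _ => Subalgebra.pow_mem _ (Xc_mem_smoothCO o) _

theorem IsP.mem_smoothCO {Om Op : Set (Odx Lp d)} {F : FnO Lp d} (hF : IsP Om Op F) :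
    F ∈ smoothCO Lp d := by
  obtain ⟨m, α, G, -, -, hG, -, -, rfl⟩ := hF
  have : (fun x => ∑ j, G j x * Xpow (α j) x) = ∑ j, G j * Xpow (α j) := by
    funext x
    simp [Finset.sum_apply]
  rw [this]
  exact Subalgebra.sum_mem _ fun j _ => Subalgebra.mul_mem _ (hG j) (Xpow_mem_smoothCO (α j))

variable [DecidableEq Lp]

def coordDir (s : Finset (Odx Lp d)) (o : Odx Lp d) : ↥s → ℝ :=
  fun i => if (i : Odx Lp d) = o then 1 else 0

theorem restrict_update (s : Finset (Odx Lp d)) (x : Odx Lp d → ℝ) (o : Odx Lp d) (t : ℝ) :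
    (fun i : ↥s => Function.update x o t i) = (fun i : ↥s => x i) + (t - x o) • coordDir s o := by
  funext i
  by_cases h : (i : Odx Lp d) = o <;> simp [coordDir, h]

theorem hasDerivAt_comp_restrict_update {s : Finset (Odx Lp d)} {g : (↥s → ℝ) → ℝ}
    (x : Odx Lp d → ℝ) (o : Odx Lp d) (hg : DifferentiableAt ℝ g fun i : ↥s => x i) :
    HasDerivAt (fun t => g fun i : ↥s => Function.update x o t i)
      (fderiv ℝ g (fun i : ↥s => x i) (coordDir s o)) (x o) := by
  simp only [restrict_update]
  have hline : HasDerivAt (fun t : ℝ => (fun i : ↥s => x i) + (t - x o) • coordDir s o)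
      (coordDir s o) (x o) := by
    simpa using (((hasDerivAt_id (x o)).sub_const (x o)).smul_const (coordDir s o)).const_add
      (fun i : ↥s => x i)
  exact hg.hasFDerivAt.comp_hasDerivAt_of_eq (x o) hline (by simp)

theorem Dpart_comp_restrict {s : Finset (Odx Lp d)} {g : (↥s → ℝ) → ℝ} (hg : Differentiable ℝ g)
    (o : Odx Lp d) :
    Dpart o (fun x => g fun i : ↥s => x i) =
      fun x => fderiv ℝ g (fun i : ↥s => x i) (coordDir s o) :=
  funext fun x => (hasDerivAt_comp_restrict_update x o (hg _)).deriv

theorem IsSmoothCO.hasDerivAt_update {F : FnO Lp d} (hF : IsSmoothCO F) (x : Odx Lp d → ℝ)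
    (o : Odx Lp d) : HasDerivAt (fun t => F (Function.update x o t)) (Dpart o F x) (x o) := by
  obtain ⟨s, g, hg, hF⟩ := hF
  obtain rfl : F = _ := funext hF
  exact (hasDerivAt_comp_restrict_update x o (hg.differentiable (by simp) _)).differentiableAt
    |>.hasDerivAt

theorem IsSmoothCO.dpart {F : FnO Lp d} (hF : IsSmoothCO F) (o : Odx Lp d) :
    IsSmoothCO (Dpart o F) := by
  obtain ⟨s, g, hg, hF⟩ := hF
  obtain rfl : F = _ := funext hF
  rw [Dpart_comp_restrict (hg.differentiable (by simp))]
  exact ⟨s, _, (hg.fderiv_right (by simp)).clm_apply contDiff_const, fun _ => rfl⟩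

theorem IsSmoothCO.Dpart_comm {F : FnO Lp d} (hF : IsSmoothCO F) (o o' : Odx Lp d) :
    Dpart o (Dpart o' F) = Dpart o' (Dpart o F) := by
  obtain ⟨s, g, hg, hF⟩ := hF
  obtain rfl : F = _ := funext hF
  have hg1 : Differentiable ℝ g := hg.differentiable (by simp)
  have hg2 : Differentiable ℝ (fderiv ℝ g) :=
    (hg.fderiv_right (m := 1) (by norm_cast)).differentiable one_ne_zero
  have second : ∀ o o' : Odx Lp d, Dpart o (Dpart o' fun x => g fun i : ↥s => x i) =
      fun x => fderiv ℝ (fderiv ℝ g) (fun i : ↥s => x i) (coordDir s o) (coordDir s o') := by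
    intro o o'
    have hdir : Differentiable ℝ fun z => fderiv ℝ g z (coordDir s o') :=
      hg2.clm_apply (differentiable_const _)
    rw [Dpart_comp_restrict hg1, Dpart_comp_restrict hdir]
    funext x
    rw [fderiv_clm_apply (hg2 _) (differentiableAt_const _)]
    simp
  rw [second, second]
  funext x
  exact (hg.contDiffAt.isSymmSndFDerivAt (by simp; norm_cast)) _ _

end Smooth

section Derivations

variable {Lp : Type} {d : ℕ} [DecidableEq Lp]

theorem Dpart_mul {F G : FnO Lp d} (hF : IsSmoothCO F) (hG : IsSmoothCO G) (o : Odx Lp d) :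
    Dpart o (F * G) = Dpart o F * G + F * Dpart o G := by
  funext x
  have := ((hF.hasDerivAt_update x o).fun_mul (hG.hasDerivAt_update x o)).deriv
  rwa [Function.update_eq_self] at this

theorem Dpart_one (o : Odx Lp d) : Dpart o (1 : FnO Lp d) = 0 :=
  funext fun _ => deriv_const _ _

theorem Dpart_Xc (o c : Odx Lp d) : Dpart o (Xc c) = if o = c then 1 else 0 := by
  funext x
  by_cases h : o = c
  · subst h
    simp [Xc, Dpart]
  · simp [h, Xc, Dpart, Function.update_of_ne (Ne.symm h)]

theorem Dpart_list_prod {α : Type*} (o : Odx Lp d) (G : α → FnO Lp d) :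
    ∀ L : List α, (∀ a ∈ L, G a ∈ smoothCO Lp d) →
      Dpart o (L.map G).prod =
        ∑ j : Fin L.length, Dpart o (G (L.get j)) * ((L.eraseIdx j).map G).prod
  | [], _ => by simpa using Dpart_one o
  | a :: L, hG => by
    have hL : ∀ b ∈ L, G b ∈ smoothCO Lp d := fun b hb => hG b (List.mem_cons_of_mem _ hb)
    rw [List.map_cons, List.prod_cons,
      Dpart_mul (hG a List.mem_cons_self) (Subalgebra.list_prod_mem _ (List.forall_mem_map.2 hL)),
      Dpart_list_prod o G L hL, Finset.mul_sum]
    refine Eq.symm ((Fin.sum_univ_succ (n := L.length) _).trans ?_)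
    simp only [List.length_cons, Fin.val_zero, Fin.val_succ, List.get_eq_getElem,
      List.getElem_cons_zero, List.getElem_cons_succ, List.eraseIdx_cons_zero,
      List.eraseIdx_cons_succ, List.map_cons, List.prod_cons]
    congr 1
    exact Finset.sum_congr rfl fun j _ => by ring

theorem Dlist_cons (o : Odx Lp d) (M : List (Odx Lp d)) (F : FnO Lp d) :
    Dlist (o :: M) F = Dpart o (Dlist M F) :=
  rfl

theorem IsSmoothCO.dlist {F : FnO Lp d} (hF : IsSmoothCO F) :
    ∀ M : List (Odx Lp d), IsSmoothCO (Dlist M F)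
  | [] => hF
  | o :: M => (hF.dlist M).dpart o

theorem Dlist_perm {M M' : List (Odx Lp d)} (h : M.Perm M') {F : FnO Lp d}
    (hF : IsSmoothCO F) : Dlist M F = Dlist M' F := by
  induction h with
  | nil => rfl
  | cons o _ ih => exact congrArg (Dpart o) ih
  | swap o o' M => exact (hF.dlist M).Dpart_comm o' o
  | trans _ _ ih₁ ih₂ => exact ih₁.trans ih₂

end Derivations

namespace TreeB

variable {Lp Dr : Type} {d : ℕ} {S : TreeB Lp Dr d}

theorem induction_on_lists {P : S.B → Prop}
    (h : ∀ l (N : List (PolyDec Lp d)) (L : List (Odx Lp d × S.B)),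
      (∀ a ∈ L, P a.2) → P (S.node l ↑N ↑L)) (σ : S.B) : P σ :=
  S.ind P (fun l N M hM => by
    rw [← Multiset.coe_toList N, ← Multiset.coe_toList M]
    exact h l _ _ fun a ha => hM a (Multiset.mem_toList.1 ha)) σ

/-- The monomial `∏ᵢ 𝒳_{(𝔱ᵢ,kᵢ)}` contributed by the decorations `𝓘_{(𝔱ᵢ,pᵢ)}[X^{kᵢ}]`. -/
def polyMonomial (N : List (PolyDec Lp d)) : FnO Lp d :=
  (N.map fun pd => Xc (pd.1.1.1, pd.1.2)).prod

/-- The indices `(𝔱ᵢ,pᵢ)` and `o_j` of the derivatives that `Υ̊` applies to `F` at the root. -/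
def derivIndices {β : Type*} (N : List (PolyDec Lp d)) (L : List (Odx Lp d × β)) :
    List (Odx Lp d) :=
  N.map (fun pd => pd.1.1) ++ L.map Prod.fst

def branchProduct (Ups : Lp → S.B → FnO Lp d) (L : List (Odx Lp d × S.B)) : FnO Lp d :=
  (L.map fun a => Ups a.1.1 a.2).prod

theorem polyMonomial_mem_smoothCO (N : List (PolyDec Lp d)) : polyMonomial N ∈ smoothCO Lp d :=
  Subalgebra.list_prod_mem _ (List.forall_mem_map.2 fun _ _ => Xc_mem_smoothCO _)

theorem branchProduct_mem_smoothCO {Ups : Lp → S.B → FnO Lp d} {L : List (Odx Lp d × S.B)}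
    (h : ∀ a ∈ L, Ups a.1.1 a.2 ∈ smoothCO Lp d) : branchProduct Ups L ∈ smoothCO Lp d :=
  Subalgebra.list_prod_mem _ (List.forall_mem_map.2 h)

variable [DecidableEq Lp] {F : Lp → Dr → FnO Lp d} {Ups : Lp → S.B → FnO Lp d}

theorem UpsSpec.node_eq (hUps : S.UpsSpec F Ups) (t : Lp) (l : Dr) (N : List (PolyDec Lp d))
    (L : List (Odx Lp d × S.B)) :
    Ups t (S.node l ↑N ↑L) =
      polyMonomial N * branchProduct Ups L * Dlist (derivIndices N L) (F t l) := by
  rw [hUps]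
  funext x
  simp only [polyMonomial, branchProduct, derivIndices, Pi.mul_apply, Pi.list_prod_apply,
    List.map_map, Function.comp_def, Xc, List.get_eq_getElem]
  rw [Fin.prod_univ_fun_getElem N fun pd => x (pd.1.1.1, pd.1.2),
    Fin.prod_univ_fun_getElem L fun a => Ups a.1.1 a.2 x]

theorem UpsSpec.isSmoothCO (hUps : S.UpsSpec F Ups) (hF : ∀ t l, IsSmoothCO (F t l))
    (σ : S.B) : ∀ t, IsSmoothCO (Ups t σ) := by
  induction σ using induction_on_lists with
  | h l N L ih =>
    intro t
    rw [hUps.node_eq]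
    exact Subalgebra.mul_mem (smoothCO Lp d) (Subalgebra.mul_mem _ (polyMonomial_mem_smoothCO N)
      (branchProduct_mem_smoothCO fun a ha => ih a ha a.1.1)) ((hF t l).dlist _)

theorem UpsSpec.node_cons (hUps : S.UpsSpec F Ups) (hF : ∀ t l, IsSmoothCO (F t l)) (b : Lp)
    (l : Dr) (N : List (PolyDec Lp d)) (L : List (Odx Lp d × S.B)) (o : Odx Lp d) (σ' : S.B) :
    Ups b (S.node l ↑N ((o, σ') ::ₘ ↑L)) =
      Ups o.1 σ' * (polyMonomial N * branchProduct Ups L *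
        Dpart o (Dlist (derivIndices N L) (F b l))) := by
  have hperm : (derivIndices N ((o, σ') :: L)).Perm (o :: derivIndices N L) := List.perm_middle
  rw [Multiset.cons_coe, hUps.node_eq, Dlist_perm hperm (hF b l), Dlist_cons]
  simp only [branchProduct, List.map_cons, List.prod_cons]
  ring

theorem UpsSpec.node_set (hUps : S.UpsSpec F Ups) (b : Lp) (l : Dr) (N : List (PolyDec Lp d))
    (L : List (Odx Lp d × S.B)) (j : Fin L.length) (σ' : S.B) :
    Ups b (S.node l ↑N ↑(L.set j ((L.get j).1, σ'))) =
      polyMonomial N * branchProduct Ups (L.eraseIdx j) * Dlist (derivIndices N L) (F b l) *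
        Ups (L.get j).1.1 σ' := by
  have hprod : branchProduct Ups (L.set j ((L.get j).1, σ')) =
      Ups (L.get j).1.1 σ' * branchProduct Ups (L.eraseIdx j) := by
    simpa [branchProduct] using
      ((List.set_perm_cons_eraseIdx j.isLt ((L.get j).1, σ')).map fun a => Ups a.1.1 a.2).prod_eq
  have hidx : derivIndices N (L.set j ((L.get j).1, σ')) = derivIndices N L := by
    simpa [derivIndices, List.map_set] using
      List.set_getElem_self (as := L.map Prod.fst) (i := j) (by simp)
  rw [hUps.node_eq, hprod, hidx]
  ring

theorem UpsSpec.node_eraseIdx_cons (hUps : S.UpsSpec F Ups) (hF : ∀ t l, IsSmoothCO (F t l))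
    (b : Lp) (l : Dr) (N : List (PolyDec Lp d)) (L : List (Odx Lp d × S.B)) (i : Fin N.length)
    (σ' : S.B) :
    Ups b (S.node l ↑(N.eraseIdx i) (((N.get i).1.1, σ') ::ₘ ↑L)) =
      Ups (N.get i).1.1.1 σ' * polyMonomial (N.eraseIdx i) * branchProduct Ups L *
        Dlist (derivIndices N L) (F b l) := by
  have hperm : (derivIndices (N.eraseIdx i) (((N.get i).1.1, σ') :: L)).Perm
      (derivIndices N L) :=
    List.perm_middle.trans
      ((((List.getElem_cons_eraseIdx_perm i.isLt).map fun pd => pd.1.1)).append_right _)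
  rw [Multiset.cons_coe, hUps.node_eq, Dlist_perm hperm (hF b l)]
  simp only [branchProduct, List.map_cons, List.prod_cons]
  ring

theorem UpsSpec.linearCombination_replace (hUps : S.UpsSpec F Ups) (b : Lp) (l : Dr)
    (N : List (PolyDec Lp d)) (L : List (Odx Lp d × S.B)) (j : Fin L.length) (w : S.B →₀ ℝ) :
    Finsupp.linearCombination ℝ (Ups b) (S.replace l N L j w) =
      polyMonomial N * branchProduct Ups (L.eraseIdx j) * Dlist (derivIndices N L) (F b l) *
        Finsupp.linearCombination ℝ (Ups (L.get j).1.1) w := by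
  have hmap : S.replace l N L j w =
      w.mapDomain fun σ' => S.node l ↑N ↑(L.set j ((L.get j).1, σ')) := rfl
  have hfun : (Ups b ∘ fun σ' => S.node l ↑N ↑(L.set j ((L.get j).1, σ'))) =
      LinearMap.mulLeft ℝ (polyMonomial N * branchProduct Ups (L.eraseIdx j) *
        Dlist (derivIndices N L) (F b l)) ∘ Ups (L.get j).1.1 :=
    funext fun σ' => hUps.node_set b l N L j σ'
  rw [hmap, Finsupp.linearCombination_mapDomain, hfun,
    ← LinearMap.map_finsupp_linearCombination, LinearMap.mulLeft_apply]

theorem UpsSpec.sum_linearCombination_replace (hUps : S.UpsSpec F Ups)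
    (hF : ∀ t l, IsSmoothCO (F t l)) {graft : Odx Lp d → S.B → S.B → (S.B →₀ ℝ)}
    (o : Odx Lp d) (σ' : S.B) (b : Lp) (l : Dr) (N : List (PolyDec Lp d))
    (L : List (Odx Lp d × S.B))
    (ih : ∀ a ∈ L, ∀ t, Finsupp.linearCombination ℝ (Ups t) (graft o σ' a.2) =
      Ups o.1 σ' * Dpart o (Ups t a.2)) :
    ∑ j : Fin L.length, Finsupp.linearCombination ℝ (Ups b)
        (S.replace l N L j (graft o σ' (L.get j).2)) =
      Ups o.1 σ' * (polyMonomial N * Dpart o (branchProduct Ups L) *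
        Dlist (derivIndices N L) (F b l)) := by
  rw [branchProduct, Dpart_list_prod o _ L fun a _ => hUps.isSmoothCO hF a.2 a.1.1]
  simp only [hUps.linearCombination_replace, ih _ (List.get_mem L _), Finset.mul_sum,
    Finset.sum_mul]
  exact Finset.sum_congr rfl fun j _ => by rw [branchProduct]; ring

theorem UpsSpec.sum_linearCombination_eraseIdx (hUps : S.UpsSpec F Ups)
    (hF : ∀ t l, IsSmoothCO (F t l)) (o : Odx Lp d) (σ' : S.B) (b : Lp) (l : Dr)
    (N : List (PolyDec Lp d)) (L : List (Odx Lp d × S.B))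
    [∀ i : Fin N.length, Decidable (o = ((N.get i).1.1.1, (N.get i).1.2))] :
    ∑ i : Fin N.length, Finsupp.linearCombination ℝ (Ups b)
        (if o = ((N.get i).1.1.1, (N.get i).1.2) then
          Finsupp.single (S.node l ↑(N.eraseIdx i) (((N.get i).1.1, σ') ::ₘ ↑L)) 1 else 0) =
      Ups o.1 σ' * (Dpart o (polyMonomial N) * branchProduct Ups L *
        Dlist (derivIndices N L) (F b l)) := by
  rw [polyMonomial, Dpart_list_prod o _ N fun _ _ => Xc_mem_smoothCO _]
  simp only [Dpart_Xc, Finset.mul_sum, Finset.sum_mul]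
  refine Finset.sum_congr rfl fun i _ => ?_
  split_ifs with h
  · rw [Finsupp.linearCombination_single, one_smul, hUps.node_eraseIdx_cons hF, h, polyMonomial]
    ring
  · simp

theorem UpsSpec.linearCombination_graft (hUps : S.UpsSpec F Ups)
    (hF : ∀ t l, IsSmoothCO (F t l)) {graft : Odx Lp d → S.B → S.B → (S.B →₀ ℝ)}
    (hgraft : S.GraftSpec graft) (o : Odx Lp d) (σ' σ : S.B) :
    ∀ b, Finsupp.linearCombination ℝ (Ups b) (graft o σ' σ) = Ups o.1 σ' * Dpart o (Ups b σ) := by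
  induction σ using induction_on_lists with
  | h l N L ih =>
    intro b
    have hA := polyMonomial_mem_smoothCO N
    have hB : branchProduct Ups L ∈ smoothCO Lp d :=
      branchProduct_mem_smoothCO fun a _ => hUps.isSmoothCO hF a.2 a.1.1
    calc Finsupp.linearCombination ℝ (Ups b) (graft o σ' (S.node l ↑N ↑L))
        = Ups o.1 σ' * (polyMonomial N * branchProduct Ups L *
            Dpart o (Dlist (derivIndices N L) (F b l))) +
          Ups o.1 σ' * (polyMonomial N * Dpart o (branchProduct Ups L) *
            Dlist (derivIndices N L) (F b l)) +
          Ups o.1 σ' * (Dpart o (polyMonomial N) * branchProduct Ups L *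
            Dlist (derivIndices N L) (F b l)) := by
          rw [hgraft, map_add, map_add, map_sum, map_sum, Finsupp.linearCombination_single,
            one_smul, hUps.node_cons hF, hUps.sum_linearCombination_replace hF o σ' b l N L ih]
          congr 1
          -- `GraftSpec` decides equality in `Lp` classically: only the `Decidable` instances differ.
          convert hUps.sum_linearCombination_eraseIdx hF o σ' b l N L
      _ = Ups o.1 σ' * Dpart o (Ups b (S.node l ↑N ↑L)) := by
          rw [hUps.node_eq, Dpart_mul (Subalgebra.mul_mem _ hA hB) ((hF b l).dlist _),
            Dpart_mul hA hB]
          ring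

end TreeB

theorem statement2_general
    {d : ℕ} {Lp Dr : Type} [DecidableEq Lp]
    (Om Op : Set (Odx Lp d))
    (F : Lp → Dr → FnO Lp d) (hF : ∀ t l, IsP Om Op (F t l))
    (SB : TreeB Lp Dr d)
    (UpsB : Lp → SB.B → FnO Lp d) (hUpsB : SB.UpsSpec F UpsB)
    (graftB : Odx Lp d → SB.B → SB.B → (SB.B →₀ ℝ)) (hgraftB : SB.GraftSpec graftB) :
    ∀ (o : Odx Lp d) (σt σ : SB.B) (b : Lp),
      (fun x => (graftB o σt σ).sum fun σ'' c => c * UpsB b σ'' x) =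
        fun x => UpsB o.1 σt x * Dpart o (UpsB b σ) x := by
  intro o σt σ b
  have key := hUpsB.linearCombination_graft (fun t l => (hF t l).mem_smoothCO) hgraftB o σt σ b
  funext x
  simpa [Finsupp.linearCombination_apply, Finsupp.sum, Finset.sum_apply] using congrFun key x

/-- Lemma `lem:graftMorphism`, first identity: the grafting morphism
property of `Υ̊`: `Υ̊^F[σ̃ ⋖_o σ] = Υ̊^F[σ̃] ◁_o Υ̊^F[σ]`, i.e. componentwise
`Υ̊^F_𝔟[σ̃ ⋖_o σ] = Υ̊^F_{o.1}[σ̃] · D_o Υ̊^F_𝔟[σ]`, where `Υ̊^F` is extended linearly. -/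
theorem statement2
    {d : ℕ} {Lp Dr : Type} [Fintype Lp] [DecidableEq Lp]
    (Om Op : Set (Odx Lp d))
    (hdisj : ∀ o, ¬(o ∈ Om ∧ o ∈ Op)) (hcover : ∀ o, o ∈ Om ∨ o ∈ Op)
    (F : Lp → Dr → FnO Lp d) (hF : ∀ t l, IsP Om Op (F t l))
    (SB : TreeB Lp Dr d)
    (UpsB : Lp → SB.B → FnO Lp d) (hUpsB : SB.UpsSpec F UpsB)
    (graftB : Odx Lp d → SB.B → SB.B → (SB.B →₀ ℝ)) (hgraftB : SB.GraftSpec graftB) :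
    ∀ (o : Odx Lp d) (σt σ : SB.B) (b : Lp),
      (fun x => (graftB o σt σ).sum fun σ'' c => c * UpsB b σ'' x) =
        fun x => UpsB o.1 σt x * Dpart o (UpsB b σ) x :=
  statement2_general Om Op F hF SB UpsB hUpsB graftB hgraftB

end SPDERenorm
end

section
/- Adjoint of the grafting operator on 𝔅 (Lemma 'lem:graftAdjoint' (i)): For o = (𝔱,p) ∈ 𝒪 define the linear map ⋖*_o: 𝔹 → 𝔹 ⊗ 𝔹 on trees σ = T^𝔪_𝔣 ∈ 𝔅 by ⋖*_o σ := Σ_{0≤k≤p} Σ_{e∈E_T} (δ_{𝔣(e),(𝔱,k)}/(p−k)!) · P^e σ ⊗ R^e_{(𝔱,k),p} σ, where (p−k)! := ∏_{i=0}^d (p[i]−k[i])!. Then for all σ₁, σ₂, σ ∈ 𝔅 one has ⟨σ₁ ⊗ σ₂, ⋖*_o σ⟩ = ⟨σ₁ ⋖_o σ₂, σ⟩, the inner product on 𝔹 ⊗ 𝔹 being the tensor product of the inner products; that is, ⋖*_o is the adjoint of the grafting operator ⋖_o. -/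
/-
Common framework: multi-indices, the algebra of smooth functions on ℝ^𝒪,
and the spaces of decorated trees 𝒱 and 𝔅 of [Bruned–Chandra–Chevyrev–Hairer,
"Renormalising SPDEs in regularity structures"], presented abstractly together
with the defining recursions of the various operators on them.
-/

open scoped BigOperators Classical

/-!
Induct on `σ`. Expanding the inner product at the root along a single branch (a Laplace
expansion of the sum over matchings of branches) pairs every term of `⋖*_o σ` against
`σ₁ ⊗ σ₂` with a term of `σ₁ ⋖_o σ₂` against `σ`. Cutting the edge to a branch of the root of
`σ` decorated by `(𝔱,k)` with `k = p` matches grafting `σ₁` at the root of `σ₂`; with `k < p` it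
matches grafting into a factor `𝓘_{(𝔱,k)}[X^p]` at the root of `σ₂`, the weight `(p-k)!` of that
factor in the inner product cancelling the `1/(p-k)!` of `⋖*_o`. A cut inside a branch matches,
by the induction hypothesis, a graft inside the paired branch of `σ₂`.
-/

theorem Fintype.sum_prod_equiv_fin_succ {R : Type*} [CommSemiring R] {n m : ℕ}
    (f : Fin (n + 1) → Fin (m + 1) → R) :
    ∑ s : Fin (n + 1) ≃ Fin (m + 1), ∏ i, f i (s i) =
      ∑ j, f 0 j * ∑ s : Fin n ≃ Fin m, ∏ i, f i.succ (j.succAbove (s i)) := by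
  rw [← Fintype.sum_fiberwise (fun s : Fin (n + 1) ≃ Fin (m + 1) => s 0)]
  refine Fintype.sum_congr _ _ fun j => ?_
  let E : (Fin n ≃ Fin m) ≃ {s : Fin (n + 1) ≃ Fin (m + 1) // s 0 = j} :=
    ((Equiv.refl _).equivCongr (finSuccAboveEquiv j)).trans <|
      (Equiv.optionSubtype j).symm.trans <|
        ((finSuccEquiv n).equivCongr (Equiv.refl _)).symm.subtypeEquiv fun e => by simp
  rw [Finset.mul_sum, ← E.sum_comp]
  refine Fintype.sum_congr _ _ fun s => ?_
  simp [E, Fin.prod_univ_succ, finSuccAboveEquiv_apply]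

namespace List

variable {α β : Type*}

theorem length_eraseIdx_cons (a : α) (l : List α) (j : Fin (a :: l).length) :
    ((a :: l).eraseIdx j).length = l.length := by
  simp [length_eraseIdx_of_lt j.isLt]

theorem get_eraseIdx_succAbove (a : α) (l : List α) (j : Fin (a :: l).length)
    (k : Fin l.length) :
    ((a :: l).eraseIdx j).get (k.cast (length_eraseIdx_cons a l j).symm) =
      (a :: l).get (j.succAbove k) := by
  simp only [get_eq_getElem, Fin.val_cast, getElem_eraseIdx]
  rcases lt_or_ge (k : ℕ) j with h | h
  · rw [dif_pos h, Fin.succAbove_of_castSucc_lt _ _ h]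
    rfl
  · rw [dif_neg h.not_gt, Fin.succAbove_of_le_castSucc _ _ h]
    rfl

section MatchingSum

variable {R : Type*} [CommSemiring R] (r : α → β → R)

/-- The permanent of the matrix `(r a b)` with rows indexed by `L` and columns by `L'`
(zero unless the lengths agree). -/
noncomputable def matchingSum (L : List α) (L' : List β) : R :=
  ∑ s : Fin L.length ≃ Fin L'.length, ∏ i, r (L.get i) (L'.get (s i))

theorem matchingSum_eq_sum_equiv (L : List α) {L' : List β} {m : ℕ} (h : L'.length = m)
    (g : Fin m → β) (hg : ∀ k, L'.get (k.cast h.symm) = g k) :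
    L.matchingSum r L' = ∑ s : Fin L.length ≃ Fin m, ∏ i, r (L.get i) (g (s i)) := by
  subst h
  simp [matchingSum, ← hg]

theorem matchingSum_comm (L : List α) (L' : List β) :
    L.matchingSum r L' = L'.matchingSum (flip r) L :=
  Fintype.sum_equiv (Equiv.symmEquiv _ _) _ _ fun s =>
    Fintype.prod_equiv s _ _ fun i => by simp [flip]

theorem matchingSum_cons_left (a : α) (L : List α) (L' : List β) :
    (a :: L).matchingSum r L' =
      ∑ j : Fin L'.length, r a (L'.get j) * L.matchingSum r (L'.eraseIdx j) := by
  cases L' with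
  | nil =>
    have : IsEmpty (Fin (L.length + 1) ≃ Fin 0) := ⟨fun s => Fin.elim0 (s 0)⟩
    simp [matchingSum]
  | cons b L' =>
    refine (Fintype.sum_prod_equiv_fin_succ fun i k => r ((a :: L).get i) ((b :: L').get k)).trans
      (Fintype.sum_congr _ _ fun j => ?_)
    rw [matchingSum_eq_sum_equiv r L (length_eraseIdx_cons b L' j) _
      (get_eraseIdx_succAbove b L' j)]
    rfl

theorem matchingSum_cons_right (L : List α) (b : β) (L' : List β) :
    L.matchingSum r (b :: L') =
      ∑ j : Fin L.length, r (L.get j) b * (L.eraseIdx j).matchingSum r L' := by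
  simp only [matchingSum_comm r, matchingSum_cons_left]
  rfl

end MatchingSum

end List

theorem Multiset.coe_set {α : Type*} (L : List α) (j : Fin L.length) (x : α) :
    (↑(L.set j x) : Multiset α) = ↑(x :: L.eraseIdx j) :=
  Multiset.coe_eq_coe.2 (List.set_perm_cons_eraseIdx j.isLt x)

namespace Finsupp

theorem linearCombination_sum_mul {R α ι : Type*} [CommSemiring R] (w : α →₀ R)
    (s : Finset ι) (f : ι → α → R) (c : ι → R) :
    linearCombination R (fun a => ∑ i ∈ s, f i a * c i) w =
      ∑ i ∈ s, linearCombination R (f i) w * c i := by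
  simp only [linearCombination_apply, Finsupp.sum, smul_eq_mul, Finset.mul_sum, Finset.sum_mul,
    mul_assoc]
  exact Finset.sum_comm

theorem linearCombination_sum_single {R α α' M : Type*} [Semiring R] [AddCommMonoid M]
    [Module R M] (v : α' → M) (F : α → α') (w : α →₀ R) :
    linearCombination R v (w.sum fun a c => single (F a) c) =
      linearCombination R (fun a => v (F a)) w :=
  linearCombination_mapDomain R F w

end Finsupp

namespace SPDERenorm

theorem mfact_ne_zero {d : ℕ} (k : MIdx d) : mfact k ≠ 0 :=
  Finset.prod_ne_zero_iff.2 fun _ _ => Nat.factorial_ne_zero _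

theorem PolyDec.eq_and_le_and_ne_of_eq {Lp : Type} {d : ℕ} {y : PolyDec Lp d} {t t' : Lp} {k p : MIdx d}
    (hp : ((t, p) : Odx Lp d) = (y.1.1.1, y.1.2)) (hk : y.1.1 = (t', k)) :
    t' = t ∧ k ≤ p ∧ k ≠ p := by
  obtain ⟨⟨⟨t₀, k₀⟩, p₀⟩, hle, hne⟩ := y
  simp only [Prod.mk.injEq] at hp hk
  obtain ⟨rfl, rfl⟩ := hp
  obtain ⟨rfl, rfl⟩ := hk
  exact ⟨rfl, hle, hne⟩

namespace TreeB

variable {Lp Dr : Type} {d : ℕ} {S : TreeB Lp Dr d}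

theorem exists_eq_node (σ : S.B) :
    ∃ (l : Dr) (N : List (PolyDec Lp d)) (L : List (Odx Lp d × S.B)), σ = S.node l ↑N ↑L := by
  obtain ⟨⟨l, N, L⟩, rfl⟩ := S.node_bij.2 σ
  induction N using Quotient.inductionOn
  induction L using Quotient.inductionOn
  exact ⟨l, _, _, rfl⟩

theorem induction_on_list {P : S.B → Prop}
    (h : ∀ (l : Dr) (N : List (PolyDec Lp d)) (L : List (Odx Lp d × S.B)),
      (∀ x ∈ L, P x.2) → P (S.node l ↑N ↑L)) (σ : S.B) : P σ :=
  S.ind P (fun l N M hM => by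
    induction N using Quotient.inductionOn
    induction M using Quotient.inductionOn
    exact h l _ _ fun x hx => hM x (Multiset.mem_coe.2 hx)) σ

noncomputable def branchWeight (ip : S.B → S.B → ℝ) (x y : Odx Lp d × S.B) : ℝ :=
  if x.1 = y.1 then ip x.2 y.2 else 0

noncomputable def polyWeight (x y : PolyDec Lp d) : ℝ :=
  if x.1 = y.1 then mfact (x.1.2 - x.1.1.2) else 0

variable {ip : S.B → S.B → ℝ}

theorem IPSpec.node_eq (hip : S.IPSpec ip) (l l' : Dr) (N N' : List (PolyDec Lp d))
    (L L' : List (Odx Lp d × S.B)) :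
    ip (S.node l ↑N ↑L) (S.node l' ↑N' ↑L') =
      (if l = l' then 1 else 0) * N.matchingSum polyWeight N' *
        L.matchingSum (branchWeight ip) L' :=
  hip l l' N N' L L'

theorem IPSpec.cons_branch_left (hip : S.IPSpec ip) (l l' : Dr) (N N' : List (PolyDec Lp d))
    (x : Odx Lp d × S.B) (L L' : List (Odx Lp d × S.B)) :
    ip (S.node l ↑N ↑(x :: L)) (S.node l' ↑N' ↑L') =
      ∑ j : Fin L'.length, branchWeight ip x (L'.get j) *
        ip (S.node l ↑N ↑L) (S.node l' ↑N' ↑(L'.eraseIdx j)) := by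
  simp only [hip.node_eq, List.matchingSum_cons_left, Finset.mul_sum]
  exact Fintype.sum_congr _ _ fun j => by ring

theorem IPSpec.cons_branch_right (hip : S.IPSpec ip) (l l' : Dr) (N N' : List (PolyDec Lp d))
    (L : List (Odx Lp d × S.B)) (x : Odx Lp d × S.B) (L' : List (Odx Lp d × S.B)) :
    ip (S.node l ↑N ↑L) (S.node l' ↑N' ↑(x :: L')) =
      ∑ j : Fin L.length, branchWeight ip (L.get j) x *
        ip (S.node l ↑N ↑(L.eraseIdx j)) (S.node l' ↑N' ↑L') := by
  simp only [hip.node_eq, List.matchingSum_cons_right, Finset.mul_sum]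
  exact Fintype.sum_congr _ _ fun j => by ring

theorem IPSpec.cons_poly_right (hip : S.IPSpec ip) (l l' : Dr) (N : List (PolyDec Lp d))
    (y : PolyDec Lp d) (N' : List (PolyDec Lp d)) (L L' : List (Odx Lp d × S.B)) :
    ip (S.node l ↑N ↑L) (S.node l' ↑(y :: N') ↑L') =
      ∑ i : Fin N.length, polyWeight (N.get i) y *
        ip (S.node l ↑(N.eraseIdx i) ↑L) (S.node l' ↑N' ↑L') := by
  simp only [hip.node_eq, List.matchingSum_cons_right, Finset.mul_sum, Finset.sum_mul]
  exact Fintype.sum_congr _ _ fun j => by ring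

theorem sum_graft_polyDec_eq_zero {t t' : Lp} {k p : MIdx d} (σ₁ τ : S.B)
    (hk : ¬(t' = t ∧ k ≤ p ∧ k ≠ p)) (N₂ : List (PolyDec Lp d)) (X : Fin N₂.length → ℝ) :
    ∑ i : Fin N₂.length,
      (if ((t, p) : Odx Lp d) = ((N₂.get i).1.1.1, (N₂.get i).1.2) then
        branchWeight ip ((N₂.get i).1.1, σ₁) ((t', k), τ) * X i else 0) = 0 :=
  Finset.sum_eq_zero fun i _ => ite_eq_right_iff.2 fun hp => by
    rw [branchWeight, if_neg fun hk' => hk (PolyDec.eq_and_le_and_ne_of_eq hp hk'), zero_mul]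

theorem IPSpec.linearCombination_cut_at_root (hip : S.IPSpec ip) (t : Lp) (p : MIdx d)
    (σ₁ : S.B) (x : Odx Lp d × S.B) (l l₂ : Dr) (N N₂ : List (PolyDec Lp d))
    (L L₂ : List (Odx Lp d × S.B)) :
    Finsupp.linearCombination ℝ (fun ab : S.B × S.B => ip σ₁ ab.1 * ip (S.node l₂ ↑N₂ ↑L₂) ab.2)
      (if hc : x.1.1 = t ∧ x.1.2 ≤ p then
        ((mfact (p - x.1.2) : ℝ))⁻¹ •
          Finsupp.single (x.2,
            S.node l
              (if he : x.1.2 = p then (↑N : Multiset (PolyDec Lp d))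
               else (⟨(x.1, p), hc.2, he⟩ ::ₘ (↑N : Multiset (PolyDec Lp d))))
              ↑L) 1
      else 0) =
      branchWeight ip ((t, p), σ₁) x * ip (S.node l₂ ↑N₂ ↑L₂) (S.node l ↑N ↑L) +
        ∑ i : Fin N₂.length,
          if ((t, p) : Odx Lp d) = ((N₂.get i).1.1.1, (N₂.get i).1.2) then
            branchWeight ip ((N₂.get i).1.1, σ₁) x *
              ip (S.node l₂ ↑(N₂.eraseIdx i) ↑L₂) (S.node l ↑N ↑L)
          else 0 := by
  obtain ⟨⟨t', k⟩, τ⟩ := x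
  by_cases hc : t' = t ∧ k ≤ p
  swap
  · rw [dif_neg hc, map_zero, sum_graft_polyDec_eq_zero _ _ fun h => hc ⟨h.1, h.2.1⟩,
      branchWeight, if_neg fun h => hc ⟨(Prod.ext_iff.1 h).1.symm, (Prod.ext_iff.1 h).2.ge⟩]
    simp
  obtain ⟨rfl, hkp⟩ := hc
  by_cases he : k = p
  · subst he
    have hfact : mfact (k - k) = 1 := by simp [mfact]
    rw [dif_pos ⟨rfl, le_rfl⟩, dif_pos rfl, hfact, Nat.cast_one, inv_one, one_smul,
      Finsupp.linearCombination_single, one_smul,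
      sum_graft_polyDec_eq_zero _ _ fun h => h.2.2 rfl, add_zero, branchWeight, if_pos rfl]
  rw [dif_pos ⟨rfl, hkp⟩, dif_neg he, branchWeight, if_neg fun h => he (Prod.ext_iff.1 h).2.symm,
    zero_mul, zero_add, map_smul, Finsupp.linearCombination_single, Multiset.cons_coe, smul_eq_mul,
    one_smul, hip.cons_poly_right, Finset.mul_sum, Finset.mul_sum]
  refine Fintype.sum_congr _ _ fun i => ?_
  obtain ⟨⟨⟨t₀, k₀⟩, p₀⟩, -, -⟩ := N₂.get i
  simp only [polyWeight, branchWeight, Prod.mk.injEq]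
  by_cases h : t₀ = t' ∧ k₀ = k ∧ p₀ = p
  · obtain ⟨rfl, rfl, rfl⟩ := h
    have hfact : (mfact (p₀ - k₀) : ℝ) ≠ 0 := Nat.cast_ne_zero.2 (mfact_ne_zero _)
    simp only [and_self, if_true]
    field_simp
  · rw [if_neg fun h' => h ⟨h'.1.1, h'.1.2, h'.2⟩]
    split_ifs with h₁ h₂
    · exact absurd ⟨h₂.1, h₂.2, h₁.2.symm⟩ h
    all_goals simp

theorem IPSpec.linearCombination_single_cons (hip : S.IPSpec ip) (l l₂ : Dr)
    (N N₂ : List (PolyDec Lp d)) (x : Odx Lp d × S.B) (L L₂ : List (Odx Lp d × S.B)) :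
    Finsupp.linearCombination ℝ (fun σ' => ip σ' (S.node l ↑N ↑L))
        (Finsupp.single (S.node l₂ ↑N₂ (x ::ₘ ↑L₂)) 1) =
      ∑ j : Fin L.length, branchWeight ip x (L.get j) *
        ip (S.node l₂ ↑N₂ ↑L₂) (S.node l ↑N ↑(L.eraseIdx j)) := by
  rw [Finsupp.linearCombination_single, one_smul, Multiset.cons_coe, hip.cons_branch_left]

variable {graft : Odx Lp d → S.B → S.B → (S.B →₀ ℝ)} {cut : Odx Lp d → S.B → (S.B × S.B →₀ ℝ)}

theorem linearCombination_cut_eq_graft (hip : S.IPSpec ip) (hgraft : S.GraftSpec graft)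
    (hcut : S.CutSpec cut) (o : Odx Lp d) (σ₁ σ₂ σ : S.B) :
    Finsupp.linearCombination ℝ (fun ab => ip σ₁ ab.1 * ip σ₂ ab.2) (cut o σ) =
      Finsupp.linearCombination ℝ (fun σ' => ip σ' σ) (graft o σ₁ σ₂) := by
  obtain ⟨t, p⟩ := o
  induction σ using induction_on_list generalizing σ₂ with
  | h l N L ih =>
  obtain ⟨l₂, N₂, L₂, rfl⟩ := exists_eq_node σ₂
  rw [hcut, hgraft]
  simp only [map_add, map_sum, hip.linearCombination_cut_at_root, TreeB.replace,
    Finsupp.linearCombination_sum_single, Multiset.coe_set, hip.cons_branch_right,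
    hip.cons_branch_left, Finset.mul_sum, ← mul_assoc, Finsupp.linearCombination_sum_mul,
    apply_ite (Finsupp.linearCombination ℝ fun σ' => ip σ' (S.node l ↑N ↑L)), map_zero,
    hip.linearCombination_single_cons]
  have adjoint_in_branch : ∀ (j : Fin L.length) (j₂ : Fin L₂.length),
      Finsupp.linearCombination ℝ
          (fun a => ip σ₁ a.1 * branchWeight ip (L₂.get j₂) ((L.get j).1, a.2))
          (cut (t, p) (L.get j).2) =
      Finsupp.linearCombination ℝ (fun a => branchWeight ip ((L₂.get j₂).1, a) (L.get j))
        (graft (t, p) σ₁ (L₂.get j₂).2) := by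
    intro j j₂
    by_cases h : (L₂.get j₂).1 = (L.get j).1
    · simpa only [branchWeight, h, if_true] using ih _ (List.get_mem L j) _
    · simp only [branchWeight, h, if_false, mul_zero]
      exact (Finsupp.linearCombination_zero_apply _ _).trans
        (Finsupp.linearCombination_zero_apply _ _).symm
  rw [Finset.sum_add_distrib, Finset.sum_comm (t := (Finset.univ : Finset (Fin N₂.length))),
    Finset.sum_comm (t := (Finset.univ : Finset (Fin L₂.length)))]
  simp only [adjoint_in_branch, Finset.sum_ite_irrel, Finset.sum_const_zero]
  ring

end TreeB

theorem statement4_general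
    {d : ℕ} {Lp Dr : Type}
    (SB : TreeB Lp Dr d)
    (ipB : SB.B → SB.B → ℝ) (hipB : SB.IPSpec ipB)
    (graftB : Odx Lp d → SB.B → SB.B → (SB.B →₀ ℝ)) (hgraftB : SB.GraftSpec graftB)
    (cutB : Odx Lp d → SB.B → (SB.B × SB.B →₀ ℝ)) (hcutB : SB.CutSpec cutB) :
    ∀ (o : Odx Lp d) (σ₁ σ₂ σ : SB.B),
      ((cutB o σ).sum fun ab c => c * (ipB σ₁ ab.1 * ipB σ₂ ab.2)) =
        (graftB o σ₁ σ₂).sum fun σ' c => c * ipB σ' σ := by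
  intro o σ₁ σ₂ σ
  simpa only [Finsupp.linearCombination_apply, smul_eq_mul] using
    TreeB.linearCombination_cut_eq_graft hipB hgraftB hcutB o σ₁ σ₂ σ

/-- Lemma `lem:graftAdjoint` (i): the cutting operator `⋖*_o` is the
adjoint of the grafting operator `⋖_o` on `𝔹`: for all `σ₁, σ₂, σ ∈ 𝔅` one has
`⟨σ₁ ⊗ σ₂, ⋖*_o σ⟩ = ⟨σ₁ ⋖_o σ₂, σ⟩`. -/
theorem statement4
    {d : ℕ} {Lp Dr : Type} [Fintype Lp] [DecidableEq Lp]
    (SB : TreeB Lp Dr d)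
    (ipB : SB.B → SB.B → ℝ) (hipB : SB.IPSpec ipB)
    (graftB : Odx Lp d → SB.B → SB.B → (SB.B →₀ ℝ)) (hgraftB : SB.GraftSpec graftB)
    (cutB : Odx Lp d → SB.B → (SB.B × SB.B →₀ ℝ)) (hcutB : SB.CutSpec cutB) :
    ∀ (o : Odx Lp d) (σ₁ σ₂ σ : SB.B),
      ((cutB o σ).sum fun ab c => c * (ipB σ₁ ab.1 * ipB σ₂ ab.2)) =
        (graftB o σ₁ σ₂).sum fun σ' c => c * ipB σ' σ :=
  statement4_general SB ipB hipB graftB hgraftB cutB hcutB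

end SPDERenorm
end

section
/- Q intertwines the grafting cut operators (Lemma 'lem:QMorphism', first identity, adjoint form): For every (𝔱,p) ∈ 𝒪 and every σ ∈ 𝔅 one has ⋖̂*_{(𝔱,p)}(Q σ) = (Q ⊗ Q)(⋖*_{(𝔱,p)} σ) in 𝕍 ⊗ 𝕍, where ⋖*_{(𝔱,p)} is the cutting operator on 𝔅-trees and ⋖̂*_{(𝔱,p)} the cutting operator on 𝒱-trees defined below. -/
/-
Common framework: multi-indices, the algebra of smooth functions on ℝ^𝒪,
and the spaces of decorated trees 𝒱 and 𝔅 of [Bruned–Chandra–Chevyrev–Hairer,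
"Renormalising SPDEs in regularity structures"], presented abstractly together
with the defining recursions of the various operators on them.
-/

open scoped BigOperators Classical

namespace SPDERenorm

/-!
Both cutting operators obey the same recursion at the root: a cut either removes an edge at
the root or happens inside one of its branches. `Q` acts node by node, so it commutes with
cuts inside a branch by induction on the tree. For a root edge of type `(𝔱,k)`, the factor
`𝓘_{(𝔱,k)}[X^p]` adjoined to the trunk's root is collapsed by `Q` to `X^{p-k}`, which is
exactly the shift `+_x^{p-k}` of the cut on `𝒱`.
-/

/-- The polynomial decoration `Σᵢ (kᵢ - pᵢ)` that `Q` leaves at a node decorated by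
`Ξ_𝔩 ∏ᵢ 𝓘_{(𝔱ᵢ,pᵢ)}[X^{kᵢ}]`. -/
def PolyDec.collapse {Lp : Type} {d : ℕ} (N : Multiset (PolyDec Lp d)) : MIdx d :=
  (N.map fun pd => pd.1.2 - pd.1.1.2).sum

namespace QSpec

variable {Lp Dr : Type} {d : ℕ} {SB : TreeB Lp Dr d} {SV : TreeV Lp Dr d} {Qf : SB.B → SV.V}

theorem apply_node (hQ : QSpec SB SV Qf) (l : Dr) (N : Multiset (PolyDec Lp d))
    (L : List (Odx Lp d × SB.B)) :
    Qf (SB.node l N ↑L) = SV.node l (PolyDec.collapse N) ↑(L.map (Prod.map id Qf)) := by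
  rw [hQ, Multiset.map_coe]
  rfl

theorem apply_node_adjoin (hQ : QSpec SB SV Qf) (l : Dr) (N : Multiset (PolyDec Lp d))
    (L : List (Odx Lp d × SB.B)) (e : Odx Lp d) {p : MIdx d} (hp : e.2 ≤ p) :
    Qf (SB.node l (if he : e.2 = p then N else ⟨(e, p), hp, he⟩ ::ₘ N) ↑L) =
      SV.node l (PolyDec.collapse N + (p - e.2)) ↑(L.map (Prod.map id Qf)) := by
  split_ifs with he
  · rw [hQ.apply_node, he, tsub_self, add_zero]
  · rw [hQ.apply_node, PolyDec.collapse, PolyDec.collapse, Multiset.map_cons, Multiset.sum_cons,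
      add_comm]

theorem mapDomain_cut_at_root (hQ : QSpec SB SV Qf) (t : Lp) (p : MIdx d) (l : Dr)
    (N : Multiset (PolyDec Lp d)) (L : List (Odx Lp d × SB.B)) (n : ℕ) (e : Odx Lp d)
    (σ : SB.B) :
    Finsupp.mapDomain (Prod.map Qf Qf)
        (if hc : e.1 = t ∧ e.2 ≤ p then
          ((mfact (p - e.2) : ℝ))⁻¹ • Finsupp.single
            (σ, SB.node l (if he : e.2 = p then N else ⟨(e, p), hc.2, he⟩ ::ₘ N)
              ↑(L.eraseIdx n))
            (1 : ℝ)
        else 0) =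
      if e.1 = t ∧ e.2 ≤ p then
        ((mfact (p - e.2) : ℝ))⁻¹ • Finsupp.single
          (Qf σ, SV.node l (PolyDec.collapse N + (p - e.2))
            ↑((L.map (Prod.map id Qf)).eraseIdx n))
          (1 : ℝ)
      else 0 := by
  by_cases hc : e.1 = t ∧ e.2 ≤ p
  · rw [dif_pos hc, if_pos hc, Finsupp.mapDomain_smul, Finsupp.mapDomain_single, Prod.map_apply,
      hQ.apply_node_adjoin _ _ _ _ hc.2, List.eraseIdx_map]
  · rw [dif_neg hc, if_neg hc, Finsupp.mapDomain_zero]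

theorem mapDomain_cut_in_branch (hQ : QSpec SB SV Qf) (l : Dr)
    (N : Multiset (PolyDec Lp d)) (L : List (Odx Lp d × SB.B)) (n : ℕ) (e : Odx Lp d)
    (w : SB.B × SB.B →₀ ℝ) :
    Finsupp.mapDomain (Prod.map Qf Qf)
        (w.sum fun ab c => Finsupp.single (ab.1, SB.node l N ↑(L.set n (e, ab.2))) c) =
      (w.mapDomain (Prod.map Qf Qf)).sum fun ab c =>
        Finsupp.single
          (ab.1, SV.node l (PolyDec.collapse N) ↑((L.map (Prod.map id Qf)).set n (e, ab.2)))
          c := by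
  rw [Finsupp.mapDomain_sum, Finsupp.sum_mapDomain_index (by simp) (by simp [Finsupp.single_add])]
  refine Finsupp.sum_congr fun ab _ => ?_
  rw [Finsupp.mapDomain_single, Prod.map_apply, hQ.apply_node, List.map_set]
  rfl

end QSpec

theorem statement6_general
    {d : ℕ} {Lp Dr : Type} [DecidableEq Lp]
    (SB : TreeB Lp Dr d) (SV : TreeV Lp Dr d)
    (Qf : SB.B → SV.V) (hQ : QSpec SB SV Qf)
    (cutB : Odx Lp d → SB.B → (SB.B × SB.B →₀ ℝ)) (hcutB : SB.CutSpec cutB)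
    (cutV : Odx Lp d → SV.V → (SV.V × SV.V →₀ ℝ)) (hcutV : SV.CutSpec cutV) :
    ∀ (o : Odx Lp d) (σ : SB.B),
      cutV o (Qf σ) = Finsupp.mapDomain (Prod.map Qf Qf) (cutB o σ) := by
  rintro ⟨t, p⟩ σ
  induction σ using SB.ind with
  | _ l N M ih =>
    obtain ⟨N, rfl⟩ : ∃ N' : List (PolyDec Lp d), ↑N' = N := Quotient.exists_rep N
    obtain ⟨L, rfl⟩ : ∃ L : List (Odx Lp d × SB.B), ↑L = M := Quotient.exists_rep M
    rw [hQ.apply_node, hcutV, hcutB, Finsupp.mapDomain_add, Finsupp.mapDomain_finsetSum,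
      Finsupp.mapDomain_finsetSum]
    congr 1 <;> refine (Fintype.sum_equiv (finCongr (L.length_map _).symm) _ _ fun j => ?_).symm
    · rw [hQ.mapDomain_cut_at_root]
      simp
    · rw [hQ.mapDomain_cut_in_branch, ← ih _ (L.get_mem j)]
      simp

/-- Lemma `lem:QMorphism`, first identity, adjoint form: `Q` intertwines
the grafting cut operators: `⋖̂*_{(𝔱,p)}(Qσ) = (Q ⊗ Q)(⋖*_{(𝔱,p)} σ)` in `𝕍 ⊗ 𝕍`. -/
theorem statement6
    {d : ℕ} {Lp Dr : Type} [Fintype Lp] [DecidableEq Lp]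
    (SB : TreeB Lp Dr d) (SV : TreeV Lp Dr d)
    (Qf : SB.B → SV.V) (hQ : QSpec SB SV Qf)
    (cutB : Odx Lp d → SB.B → (SB.B × SB.B →₀ ℝ)) (hcutB : SB.CutSpec cutB)
    (cutV : Odx Lp d → SV.V → (SV.V × SV.V →₀ ℝ)) (hcutV : SV.CutSpec cutV) :
    ∀ (o : Odx Lp d) (σ : SB.B),
      cutV o (Qf σ) = Finsupp.mapDomain (Prod.map Qf Qf) (cutB o σ) :=
  statement6_general SB SV Qf hQ cutB hcutB cutV hcutV

end SPDERenorm
end
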